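/- Let φ(z) = max{ Σ_{k=2}^∞ α_k log(|z₁|+|z₂-1/k|^{β_k}), λ log|z₃| } with α_k = 2^{-k!}, β_k = 3·2^{k!}, λ > 6. Fix α > 1, ε > 0, and a point p = (0, c, 0) with c ≠ 0 and c ≠ 1/k for all k ≥ 2. Then 1/(|z₁|²(-log|z₁|)^α) · e^{-(1+ε)φ} is Lebesgue-integrable on some neighborhood of p in ℂ³. -/

import Mathlib

open MeasureTheory Complex Real Filter

noncomputable section

/-- `log` with values in `EReal`, with `log x = -∞` for `x ≤ 0`. -/
def eLog (x : ℝ) : EReal := if x ≤ 0 then ⊥ else ((Real.log x : ℝ) : EReal)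

/-- `α_k = 2^{-k!}`. -/
def al (k : ℕ) : ℝ := ((2 : ℝ) ^ (Nat.factorial k))⁻¹

/-- `β_k = 3 · 2^{k!}`. -/
def be (k : ℕ) : ℝ := 3 * (2 : ℝ) ^ (Nat.factorial k)

/-- `φ(z) = max{Σ_{k≥2} α_k log(|z₁|+|z₂-1/k|^{β_k}), λ log|z₃|}` on `ℂ³`. -/
def phi3 (lam : ℝ) (z : Fin 3 → ℂ) : EReal :=
  max (∑' k : ℕ, ((al (k + 2) : ℝ) : EReal) *
      eLog (‖z 0‖ + ‖z 1 - 1 / ((k : ℂ) + 2)‖ ^ be (k + 2)))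
    (((lam : ℝ) : EReal) * eLog (‖z 2‖))

namespace AdjointAux

def realToEReal : ℝ →+ EReal where
  toFun := Real.toEReal
  map_zero' := rfl
  map_add' := EReal.coe_add

lemma coe_finset_sum' (F : Finset ℕ) (u : ℕ → ℝ) :
    ((∑ k ∈ F, u k : ℝ) : EReal) = ∑ k ∈ F, ((u k : ℝ) : EReal) :=
  map_sum realToEReal u F

lemma ereal_tsum_ge {f : ℕ → EReal} {B : ℝ} (hB : B ≤ 0)
    (h : ∀ F : Finset ℕ, (B : EReal) ≤ ∑ k ∈ F, f k) : (B : EReal) ≤ ∑' k, f k := by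
  by_cases hs : Summable f
  · obtain ⟨s, hsum⟩ := hs
    rw [hsum.tsum_eq]
    exact ge_of_tendsto' hsum h
  · rw [tsum_eq_zero_of_not_summable hs]
    exact_mod_cast hB

lemma ereal_mul_mono (x : EReal) (B a : ℝ) (ha : 0 < a) (h : (B : EReal) ≤ x) :
    ((a * B : ℝ) : EReal) ≤ (a : EReal) * x := by
  induction x with
  | bot => exact absurd h (by simp)
  | coe r =>
    rw [← EReal.coe_mul]
    exact_mod_cast mul_le_mul_of_nonneg_left (by exact_mod_cast h) ha.le
  | top => rw [EReal.coe_mul_top_of_pos ha]; exact le_top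


lemma al_pos (k : ℕ) : 0 < al k := by unfold al; positivity

lemma be_pos (k : ℕ) : 0 < be k := by unfold be; positivity

lemma al_mul_be (k : ℕ) : al k * be k = 3 := by
  rw [al, be]; field_simp

lemma factorial_ge (N k : ℕ) (h : N ≤ k) :
    Nat.factorial (N + 2) + (k - N) ≤ Nat.factorial (k + 2) := by
  induction k, h using Nat.le_induction with
  | base => simp
  | succ k hk ih =>
    have h1 : Nat.factorial (k + 1 + 2) = (k + 3) * Nat.factorial (k + 2) := rfl
    have h2 : 0 < Nat.factorial (k + 2) := Nat.factorial_pos _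
    have h3 : (k + 3) * Nat.factorial (k + 2) ≥ Nat.factorial (k + 2) + 1 := by nlinarith
    omega

lemma al_le (N k : ℕ) (h : N ≤ k) : al (k + 2) ≤ al (N + 2) * ((2:ℝ))⁻¹ ^ (k - N) := by
  rw [al, al, inv_pow, ← mul_inv, ← pow_add]
  apply inv_anti₀ (by positivity)
  exact pow_le_pow_right₀ (by norm_num) (factorial_ge N k h)

lemma tail_sum_le (N : ℕ) (F : Finset ℕ) (hF : ∀ k ∈ F, N ≤ k) :
    ∑ k ∈ F, al (k + 2) ≤ 2 * al (N + 2) := by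
  calc ∑ k ∈ F, al (k + 2) ≤ ∑ k ∈ F, al (N + 2) * ((2:ℝ))⁻¹ ^ (k - N) :=
        Finset.sum_le_sum fun k hk => al_le N k (hF k hk)
    _ = al (N + 2) * ∑ k ∈ F, ((2:ℝ))⁻¹ ^ (k - N) := by rw [Finset.mul_sum]
    _ ≤ al (N + 2) * 2 := by
        apply mul_le_mul_of_nonneg_left _ (al_pos _).le
        have hinj : ∀ x ∈ F, ∀ y ∈ F, x - N = y - N → x = y := by
          intro x hx y hy hxy
          have := hF x hx; have := hF y hy; omega
        calc ∑ k ∈ F, ((2:ℝ))⁻¹ ^ (k - N) = ∑ j ∈ F.image (· - N), ((2:ℝ))⁻¹ ^ j :=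
              (Finset.sum_image hinj).symm
          _ ≤ ∑' j : ℕ, ((2:ℝ))⁻¹ ^ j := by
              apply Summable.sum_le_tsum _ (fun j _ => by positivity)
              exact summable_geometric_of_lt_one (by norm_num) (by norm_num)
          _ = 2 := by
              rw [tsum_geometric_of_lt_one (by norm_num) (by norm_num)]; norm_num
    _ = 2 * al (N + 2) := mul_comm _ _

lemma nat_fact_lower (N : ℕ) (h : 3 ≤ N) : N * (N + 2) ≤ Nat.factorial (N + 1) := by
  have h1 : N + 2 ≤ 2 * N := by omega
  have h4 : 2 ≤ Nat.factorial (N - 1) := by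
    calc 2 = Nat.factorial 2 := rfl
      _ ≤ Nat.factorial (N - 1) := Nat.factorial_le (by omega)
  have h3 : Nat.factorial (N + 1) = (N + 1) * (N * Nat.factorial (N - 1)) := by
    have hN : N = (N - 1) + 1 := by omega
    rw [Nat.factorial_succ]
    congr 1
    rw [hN, Nat.factorial_succ]
    congr 2 <;> omega
  calc N * (N + 2) ≤ N * (2 * N) := Nat.mul_le_mul_left _ h1
    _ ≤ (N + 1) * (N * 2) := by nlinarith
    _ ≤ (N + 1) * (N * Nat.factorial (N - 1)) :=
        Nat.mul_le_mul_left _ (Nat.mul_le_mul_left _ h4)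
    _ = Nat.factorial (N + 1) := h3.symm

lemma exists_d0 (c : ℂ) (hc0 : c ≠ 0) (hck : ∀ k : ℕ, 2 ≤ k → c ≠ 1 / (k : ℂ)) :
    ∃ d0 : ℝ, 0 < d0 ∧ ∀ k : ℕ, d0 ≤ ‖c - 1 / ((k : ℂ) + 2)‖ := by
  set f : ℕ → ℝ := fun k => ‖c - 1 / ((k : ℂ) + 2)‖ with hf
  have hfpos : ∀ k, 0 < f k := by
    intro k
    have h1 : c ≠ 1 / (((k + 2 : ℕ) : ℂ)) := hck (k + 2) (by omega)
    have h2 : c ≠ 1 / ((k : ℂ) + 2) := by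
      intro h; apply h1; rw [h]; push_cast; ring_nf
    simpa [hf, sub_ne_zero] using h2
  set K := ⌈2 / ‖c‖⌉₊ with hK
  have habs : 0 < ‖c‖ := by simpa using hc0
  have hKf : ∀ k, K ≤ k → ‖c‖ / 2 ≤ f k := by
    intro k hk
    have hk2 : 2 / ‖c‖ ≤ (k : ℝ) + 2 := by
      calc 2 / ‖c‖ ≤ (K : ℝ) := Nat.le_ceil _
        _ ≤ (k : ℝ) := by exact_mod_cast hk
        _ ≤ (k : ℝ) + 2 := by linarith
    have hlow : ‖1 / ((k : ℂ) + 2)‖ ≤ ‖c‖ / 2 := by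
      have hval : ‖(k : ℂ) + 2‖ = (k : ℝ) + 2 := by
        rw [show ((k : ℂ) + 2) = (((k + 2 : ℕ)) : ℂ) by push_cast; ring, Complex.norm_natCast]
        push_cast; ring
      rw [norm_div, norm_one, hval, div_le_div_iff₀ (by positivity) (by norm_num)]
      rw [div_le_iff₀ habs] at hk2
      linarith
    have h5 : ‖c‖ - ‖1 / ((k : ℂ) + 2)‖ ≤ f k := by
      simpa [hf] using norm_sub_norm_le c (1 / ((k : ℂ) + 2))
    linarith
  set d1 := ((Finset.range (K + 1)).image f).min' (by simp) with hd1
  have hd1pos : 0 < d1 := by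
    obtain ⟨j, _, hj⟩ := Finset.mem_image.1
      (Finset.min'_mem ((Finset.range (K + 1)).image f) (by simp))
    have hp := hfpos j
    rw [hj] at hp
    rw [hd1]
    exact hp
  refine ⟨min d1 (‖c‖ / 2), lt_min hd1pos (by positivity), fun k => ?_⟩
  rcases le_or_gt k K with h | h
  · calc min d1 (‖c‖ / 2) ≤ d1 := min_le_left _ _
      _ ≤ f k := Finset.min'_le _ _ (Finset.mem_image.2 ⟨k, Finset.mem_range.2 (by omega), rfl⟩)
  · calc min d1 (‖c‖ / 2) ≤ ‖c‖ / 2 := min_le_right _ _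
      _ ≤ f k := hKf k h.le

lemma term_lower {e0 t L C : ℝ} (he0 : 0 < e0) (ht : 0 < t)
    (hL : L = -Real.log t) (hC : C = 3 * (-Real.log e0))
    {dk : ℝ} (hdk : e0 ≤ dk) (k : ℕ) :
    -(min (al (k + 2) * L) C) ≤ al (k + 2) * Real.log (t + dk ^ be (k + 2)) := by
  have hrpow : (0:ℝ) ≤ dk ^ be (k + 2) := Real.rpow_nonneg (le_trans he0.le hdk) _
  have h1 : Real.log t ≤ Real.log (t + dk ^ be (k + 2)) :=
    Real.log_le_log ht (le_add_of_nonneg_right hrpow)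
  have h2 : be (k + 2) * Real.log e0 ≤ Real.log (t + dk ^ be (k + 2)) := by
    have hle : e0 ^ be (k + 2) ≤ t + dk ^ be (k + 2) :=
      le_trans (Real.rpow_le_rpow he0.le hdk (be_pos _).le) (le_add_of_nonneg_left ht.le)
    calc be (k + 2) * Real.log e0 = Real.log (e0 ^ be (k + 2)) := (Real.log_rpow he0 _).symm
      _ ≤ _ := Real.log_le_log (Real.rpow_pos_of_pos he0 _) hle
  rcases min_cases (al (k + 2) * L) C with ⟨hm, _⟩ | ⟨hm, _⟩
  · rw [hm, hL]
    have := mul_le_mul_of_nonneg_left h1 (al_pos (k + 2)).le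
    nlinarith
  · rw [hm, hC]
    have := mul_le_mul_of_nonneg_left h2 (al_pos (k + 2)).le
    have h4 : al (k + 2) * (be (k + 2) * Real.log e0) = 3 * Real.log e0 := by
      rw [← mul_assoc, al_mul_be]
    linarith

lemma sum_min_bound {L C : ℝ} (hL : 0 ≤ L) (hC : 0 ≤ C) (N : ℕ)
    (hN : ∀ k, N ≤ k → al (k + 2) * L ≤ C) (F : Finset ℕ) :
    ∑ k ∈ F, min (al (k + 2) * L) C ≤ ((N : ℝ) + 2) * C := by
  classical
  rw [← Finset.sum_filter_add_sum_filter_not F (fun k => k < N)]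
  have b1 : ∑ k ∈ F.filter (fun k => k < N), min (al (k + 2) * L) C ≤ (N : ℝ) * C := by
    calc ∑ k ∈ F.filter (fun k => k < N), min (al (k + 2) * L) C
        ≤ ∑ _k ∈ F.filter (fun k => k < N), C :=
          Finset.sum_le_sum fun k _ => min_le_right _ _
      _ = (F.filter (fun k => k < N)).card * C := by rw [Finset.sum_const, nsmul_eq_mul]
      _ ≤ (N : ℝ) * C := by
          apply mul_le_mul_of_nonneg_right _ hC
          have : (F.filter (fun k => k < N)).card ≤ N := by
            have hsub : F.filter (fun k => k < N) ⊆ Finset.range N := by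
              intro x hx
              simp only [Finset.mem_filter] at hx
              exact Finset.mem_range.2 hx.2
            simpa using Finset.card_le_card hsub
          exact_mod_cast this
  have b2 : ∑ k ∈ F.filter (fun k => ¬ k < N), min (al (k + 2) * L) C ≤ 2 * C := by
    calc ∑ k ∈ F.filter (fun k => ¬ k < N), min (al (k + 2) * L) C
        ≤ ∑ k ∈ F.filter (fun k => ¬ k < N), al (k + 2) * L :=
          Finset.sum_le_sum fun k _ => min_le_left _ _
      _ = (∑ k ∈ F.filter (fun k => ¬ k < N), al (k + 2)) * L := by
          rw [Finset.sum_mul]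
      _ ≤ (2 * al (N + 2)) * L := by
          apply mul_le_mul_of_nonneg_right _ hL
          apply tail_sum_le
          intro k hk
          simp only [Finset.mem_filter] at hk
          omega
      _ ≤ 2 * C := by
          have := hN N le_rfl
          nlinarith [al_pos (N + 2), hL]
  linarith

lemma exists_N0 (ε e0 C : ℝ) (hε : 0 < ε) (he0 : 0 < e0) (hC : 0 ≤ C) :
    ∃ N₀ : ℕ, 3 ≤ N₀ ∧ ∀ N : ℕ, N₀ < N →
      (1 + ε) * (((N : ℝ)) + 2) * C ≤ e0 * (Nat.factorial (N + 1) : ℝ) * Real.log 2 := by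
  have hlog2 : 0 < Real.log 2 := Real.log_pos (by norm_num)
  refine ⟨max 3 ⌈(1 + ε) * C / (e0 * Real.log 2)⌉₊, le_max_left _ _, fun N hN => ?_⟩
  have hN3 : 3 ≤ N := le_trans (le_max_left _ _) hN.le
  have hceil : (1 + ε) * C / (e0 * Real.log 2) ≤ (N : ℝ) := by
    calc (1 + ε) * C / (e0 * Real.log 2) ≤ (⌈(1 + ε) * C / (e0 * Real.log 2)⌉₊ : ℝ) :=
          Nat.le_ceil _
      _ ≤ (N : ℝ) := by exact_mod_cast le_trans (le_max_right 3 _) hN.le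
  have h1 : (1 + ε) * C ≤ e0 * Real.log 2 * (N : ℝ) := by
    rw [div_le_iff₀ (by positivity)] at hceil
    linarith
  have h2 : (N : ℝ) * ((N : ℝ) + 2) ≤ (Nat.factorial (N + 1) : ℝ) := by
    exact_mod_cast nat_fact_lower N hN3
  calc (1 + ε) * (((N : ℝ)) + 2) * C = ((1 + ε) * C) * ((N : ℝ) + 2) := by ring
    _ ≤ (e0 * Real.log 2 * (N : ℝ)) * ((N : ℝ) + 2) := by
        apply mul_le_mul_of_nonneg_right h1 (by positivity)
    _ = (e0 * Real.log 2) * ((N : ℝ) * ((N : ℝ) + 2)) := by ring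
    _ ≤ (e0 * Real.log 2) * (Nat.factorial (N + 1) : ℝ) := by
        apply mul_le_mul_of_nonneg_left h2 (by positivity)
    _ = e0 * (Nat.factorial (N + 1) : ℝ) * Real.log 2 := by ring

lemma master_pointwise (ε e0 C : ℝ) (hε : 0 < ε) (he0 : 0 < e0) (he05 : e0 ≤ 1 / 2)
    (hC : C = 3 * (-Real.log e0)) (N₀ : ℕ) (hN₀3 : 3 ≤ N₀)
    (hN₀ : ∀ N : ℕ, N₀ < N →
      (1 + ε) * (((N : ℝ)) + 2) * C ≤ e0 * (Nat.factorial (N + 1) : ℝ) * Real.log 2)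
    (t L : ℝ) (ht : 0 < t) (htL : L = -Real.log t) (hL1 : 1 < L)
    (d : ℕ → ℝ) (hd : ∀ k, e0 ≤ d k) (T : EReal) :
    EReal.exp (-(((1 + ε : ℝ) : EReal) *
        max (∑' k : ℕ, ((al (k + 2) : ℝ) : EReal) * eLog (t + d k ^ be (k + 2))) T)) ≤
      ENNReal.ofReal (Real.exp ((1 + ε) * (((N₀ : ℝ)) + 2) * C) * L ^ e0) := by
  have hC1 : 1 ≤ C := by
    have h2 : Real.log e0 ≤ Real.log (1 / 2) := by
      apply Real.log_le_log he0 he05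
    rw [Real.log_div one_ne_zero (by norm_num), Real.log_one] at h2
    have := Real.log_two_gt_d9
    rw [hC]; linarith
  have hL0 : 0 < L := lt_trans one_pos hL1
  -- the threshold N
  have hex : ∃ k : ℕ, L ≤ C * 2 ^ Nat.factorial (k + 2) := by
    obtain ⟨k, hk⟩ := exists_nat_ge L
    refine ⟨k, le_trans hk ?_⟩
    have h1 : (k : ℝ) ≤ 2 ^ Nat.factorial (k + 2) := by
      calc (k : ℝ) ≤ (2 ^ k : ℕ) := by exact_mod_cast (Nat.lt_two_pow_self).le
        _ ≤ ((2 ^ Nat.factorial (k + 2) : ℕ) : ℝ) := by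
            exact_mod_cast Nat.pow_le_pow_right (by norm_num)
              (le_trans (Nat.le_succ_of_le (Nat.le_succ k)) (Nat.self_le_factorial _))
        _ = 2 ^ Nat.factorial (k + 2) := by push_cast; ring
    nlinarith
  set N := Nat.find hex with hNdef
  have hNfind : L ≤ C * 2 ^ Nat.factorial (N + 2) := Nat.find_spec hex
  have hNall : ∀ k, N ≤ k → al (k + 2) * L ≤ C := by
    intro k hk
    have hmono : (2:ℝ) ^ Nat.factorial (N + 2) ≤ 2 ^ Nat.factorial (k + 2) := by
      apply pow_le_pow_right₀ (by norm_num)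
      exact Nat.factorial_le (by omega)
    have h1 : L ≤ C * 2 ^ Nat.factorial (k + 2) := by nlinarith
    rw [al, inv_mul_le_iff₀ (by positivity)]
    exact le_trans h1 (le_of_eq (mul_comm _ _))
  -- lower bound on the sum
  set B : ℝ := -(((N : ℝ) + 2) * C) with hB
  have hBle : (B : EReal) ≤
      ∑' k : ℕ, ((al (k + 2) : ℝ) : EReal) * eLog (t + d k ^ be (k + 2)) := by
    apply ereal_tsum_ge (by rw [hB]; nlinarith [Nat.cast_nonneg (α := ℝ) N])
    intro F
    have hterm : ∀ k : ℕ, ((al (k + 2) : ℝ) : EReal) * eLog (t + d k ^ be (k + 2)) =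
        ((al (k + 2) * Real.log (t + d k ^ be (k + 2)) : ℝ) : EReal) := by
      intro k
      have hpos : 0 < t + d k ^ be (k + 2) :=
        lt_of_lt_of_le ht (le_add_of_nonneg_right (Real.rpow_nonneg (le_trans he0.le (hd k)) _))
      rw [eLog, if_neg (not_le.2 hpos), EReal.coe_mul]
    calc (B : EReal) ≤ ((∑ k ∈ F, al (k + 2) * Real.log (t + d k ^ be (k + 2)) : ℝ) : EReal) := by
          apply EReal.coe_le_coe_iff.2
          have hs := sum_min_bound hL0.le (by linarith) N hNall F
          have ht2 : -(((N : ℝ) + 2) * C) ≤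
              ∑ k ∈ F, al (k + 2) * Real.log (t + d k ^ be (k + 2)) := by
            calc -(((N : ℝ) + 2) * C) ≤ ∑ k ∈ F, -(min (al (k + 2) * L) C) := by
                  rw [Finset.sum_neg_distrib]
                  linarith
              _ ≤ _ := Finset.sum_le_sum fun k _ => term_lower he0 ht htL hC (hd k) k
          exact ht2
      _ = ∑ k ∈ F, ((al (k + 2) * Real.log (t + d k ^ be (k + 2)) : ℝ) : EReal) :=
          coe_finset_sum' F _
      _ = ∑ k ∈ F, ((al (k + 2) : ℝ) : EReal) * eLog (t + d k ^ be (k + 2)) := by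
          exact Finset.sum_congr rfl fun k _ => (hterm k).symm
  have hphi : (B : EReal) ≤
      max (∑' k : ℕ, ((al (k + 2) : ℝ) : EReal) * eLog (t + d k ^ be (k + 2))) T :=
    le_trans hBle (le_max_left _ _)
  -- push through exp
  have hexp : EReal.exp (-(((1 + ε : ℝ) : EReal) *
      max (∑' k : ℕ, ((al (k + 2) : ℝ) : EReal) * eLog (t + d k ^ be (k + 2))) T)) ≤
      ENNReal.ofReal (Real.exp (-((1 + ε) * B))) := by
    have h1 := ereal_mul_mono _ B (1 + ε) (by linarith) hphi
    have h2 : -(((1 + ε : ℝ) : EReal) *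
        max (∑' k : ℕ, ((al (k + 2) : ℝ) : EReal) * eLog (t + d k ^ be (k + 2))) T) ≤
        ((-((1 + ε) * B) : ℝ) : EReal) := by
      rw [EReal.coe_neg]
      exact EReal.neg_le_neg_iff.2 h1
    calc EReal.exp _ ≤ EReal.exp ((-((1 + ε) * B) : ℝ) : EReal) := EReal.exp_monotone h2
      _ = ENNReal.ofReal (Real.exp (-((1 + ε) * B))) := EReal.exp_coe _
  refine le_trans hexp (ENNReal.ofReal_le_ofReal ?_)
  -- scalar inequality
  have hKone : 1 ≤ Real.exp ((1 + ε) * (((N₀ : ℝ)) + 2) * C) := by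
    rw [Real.one_le_exp_iff]
    positivity
  have hrpow1 : 1 ≤ L ^ e0 := Real.one_le_rpow hL1.le he0.le
  have key : -((1 + ε) * B) = (1 + ε) * (((N : ℝ)) + 2) * C := by rw [hB]; ring
  rcases le_or_gt N N₀ with hcase | hcase
  · have hNN : (N : ℝ) ≤ (N₀ : ℝ) := by exact_mod_cast hcase
    have e1 : Real.exp (-((1 + ε) * B)) ≤ Real.exp ((1 + ε) * (((N₀ : ℝ)) + 2) * C) := by
      rw [key]
      apply Real.exp_le_exp.2
      have hmul : (1 + ε) * ((N : ℝ) + 2) ≤ (1 + ε) * ((N₀ : ℝ) + 2) := by nlinarith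
      nlinarith [mul_le_mul_of_nonneg_right hmul (le_trans zero_le_one hC1)]
    have e2 : Real.exp ((1 + ε) * (((N₀ : ℝ)) + 2) * C) ≤
        Real.exp ((1 + ε) * (((N₀ : ℝ)) + 2) * C) * L ^ e0 :=
      le_mul_of_one_le_right (Real.exp_pos _).le hrpow1
    exact le_trans e1 e2
  · have hN1 : 1 ≤ N := by omega
    have hmin : ¬ (L ≤ C * 2 ^ Nat.factorial ((N - 1) + 2)) := Nat.find_min hex (by omega)
    push_neg at hmin
    have hidx : (N - 1) + 2 = N + 1 := by omega
    rw [hidx] at hmin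
    have hlogL : (Nat.factorial (N + 1) : ℝ) * Real.log 2 ≤ Real.log L := by
      have h2f : (2:ℝ) ^ Nat.factorial (N + 1) ≤ L := by
        nlinarith [pow_pos (show (0:ℝ) < 2 by norm_num) (Nat.factorial (N + 1))]
      have hlp : Real.log ((2:ℝ) ^ Nat.factorial (N + 1)) =
          (Nat.factorial (N + 1) : ℝ) * Real.log 2 := Real.log_pow _ _
      rw [← hlp]
      exact Real.log_le_log (by positivity) h2f
    have hmain : (1 + ε) * (((N : ℝ)) + 2) * C ≤ e0 * Real.log L := by
      have step1 := hN₀ N hcase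
      have step2 : e0 * (Nat.factorial (N + 1) : ℝ) * Real.log 2 ≤ e0 * Real.log L := by
        calc e0 * (Nat.factorial (N + 1) : ℝ) * Real.log 2
            = e0 * ((Nat.factorial (N + 1) : ℝ) * Real.log 2) := by ring
          _ ≤ e0 * Real.log L := mul_le_mul_of_nonneg_left hlogL he0.le
      linarith
    have e1 : Real.exp (-((1 + ε) * B)) ≤ Real.exp (e0 * Real.log L) := by
      rw [key]
      exact Real.exp_le_exp.2 hmain
    have e2 : Real.exp (e0 * Real.log L) = L ^ e0 := by
      rw [Real.rpow_def_of_pos hL0, mul_comm]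
    have e3 : L ^ e0 ≤ Real.exp ((1 + ε) * (((N₀ : ℝ)) + 2) * C) * L ^ e0 :=
      le_mul_of_one_le_left (by positivity) hKone
    rw [e2] at e1
    exact le_trans e1 e3


end AdjointAux
set_option maxHeartbeats 2000000 in
/-- For `λ > 6`, `α > 1`, `ε > 0`, and a point `p = (0, c, 0)` with `c ≠ 0` and `c ≠ 1/k` for
all `k ≥ 2`, the function `e^{-(1+ε)φ}/(|z₁|²(-log|z₁|)^α)` is Lebesgue-integrable on some
neighborhood of `p` in `ℂ³`. -/
theorem adjoint_ideal_stmt12 (lam : ℝ) (hlam : 6 < lam) (α : ℝ) (hα : 1 < α)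
    (ε : ℝ) (hε : 0 < ε) (c : ℂ) (hc0 : c ≠ 0) (hck : ∀ k : ℕ, 2 ≤ k → c ≠ 1 / (k : ℂ)) :
    ∃ V ∈ nhds (![0, c, 0] : Fin 3 → ℂ),
      ∫⁻ z in V, EReal.exp (-((((1 + ε : ℝ)) : EReal) * phi3 lam z)) *
        ENNReal.ofReal
          (1 / (‖z 0‖ ^ 2 * (-Real.log (‖z 0‖)) ^ α)) < ⊤ := by
  classical
  open AdjointAux in
  obtain ⟨d0, hd0pos, hd0⟩ := AdjointAux.exists_d0 c hc0 hck
  set e0 : ℝ := min (min (1 / 2) ((α - 1) / 2)) (d0 / 2) with he0def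
  have he0pos : 0 < e0 := lt_min (lt_min (by norm_num) (by linarith)) (by linarith)
  have he05 : e0 ≤ 1 / 2 := le_trans (min_le_left _ _) (min_le_left _ _)
  have he0α : e0 ≤ (α - 1) / 2 := le_trans (min_le_left _ _) (min_le_right _ _)
  have he0d : e0 ≤ d0 / 2 := min_le_right _ _
  set C : ℝ := 3 * (-Real.log e0) with hCdef
  have hC0 : 0 ≤ C := by
    have hlog : Real.log e0 < 0 := Real.log_neg he0pos (by linarith)
    rw [hCdef]; linarith
  obtain ⟨N₀, hN₀3, hN₀⟩ := AdjointAux.exists_N0 ε e0 C hε he0pos hC0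
  set K : ℝ := Real.exp ((1 + ε) * ((N₀ : ℝ) + 2) * C) with hKdef
  have hK0 : 0 ≤ K := (Real.exp_pos _).le
  -- the neighborhood
  set V : Set (Fin 3 → ℂ) :=
    Set.pi Set.univ ![Metric.ball (0 : ℂ) (Real.exp (-1)), Metric.ball c e0,
      Metric.ball (0 : ℂ) 1] with hVdef
  have hVnhds : V ∈ nhds (![0, c, 0] : Fin 3 → ℂ) := by
    apply set_pi_mem_nhds Set.finite_univ
    intro i _
    fin_cases i
    · simpa using Metric.ball_mem_nhds (0 : ℂ) (Real.exp_pos _)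
    · simpa using Metric.ball_mem_nhds c he0pos
    · simpa using Metric.ball_mem_nhds (0 : ℂ) one_pos
  refine ⟨V, hVnhds, ?_⟩
  -- the annuli
  set A : ℕ → Set ℂ := fun m =>
    {w : ℂ | Real.exp (-((m : ℝ) + 2)) ≤ ‖w‖ ∧
      ‖w‖ < Real.exp (-((m : ℝ) + 1))} with hAdef
  have hAmeas : ∀ m, MeasurableSet (A m) := by
    intro m
    have : A m = (fun w : ℂ => ‖w‖) ⁻¹'
        (Set.Ico (Real.exp (-((m : ℝ) + 2))) (Real.exp (-((m : ℝ) + 1)))) := rfl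
    rw [this]
    exact (continuous_norm.measurable) measurableSet_Ico
  set S : ℕ → Set (Fin 3 → ℂ) := fun m =>
    Set.pi Set.univ ![A m, Metric.ball c e0, Metric.ball (0 : ℂ) 1] with hSdef
  have hSmeas : ∀ m, MeasurableSet (S m) := by
    intro m
    apply MeasurableSet.univ_pi
    intro i
    fin_cases i
    · simpa using hAmeas m
    · simpa using measurableSet_ball
    · simpa using measurableSet_ball
  -- the z₁ = 0 slice is null
  have hnull : volume {z : Fin 3 → ℂ | z 0 = 0} = 0 := by
    have heq : {z : Fin 3 → ℂ | z 0 = 0} =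
        Set.pi Set.univ ![{(0 : ℂ)}, Set.univ, Set.univ] := by
      ext z
      constructor
      · intro h i _
        fin_cases i
        · simpa using h
        · simp
        · simp
      · intro h
        have := h 0 (Set.mem_univ 0)
        simpa using this
    rw [heq, volume_pi_pi, Fin.prod_univ_three]
    simp
  -- covering
  have hcover : V ⊆ {z : Fin 3 → ℂ | z 0 = 0} ∪ ⋃ m, S m := by
    intro z hz
    by_cases h0 : z 0 = 0
    · exact Or.inl h0
    right
    have hz0 : z 0 ∈ Metric.ball (0 : ℂ) (Real.exp (-1)) := by
      have := hz 0 (Set.mem_univ 0); simpa using this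
    have hz1 : z 1 ∈ Metric.ball c e0 := by
      have := hz 1 (Set.mem_univ 1); simpa using this
    have hz2 : z 2 ∈ Metric.ball (0 : ℂ) 1 := by
      have := hz 2 (Set.mem_univ 2); simpa using this
    set t : ℝ := ‖z 0‖ with htdef
    have ht : 0 < t := by simpa [htdef] using h0
    have htlt : t < Real.exp (-1) := by
      rw [htdef]
      simpa using Metric.mem_ball.1 hz0
    set L : ℝ := -Real.log t with hLdef
    have hL1 : 1 < L := by
      have := Real.log_lt_log ht htlt
      rw [Real.log_exp] at this
      rw [hLdef]; linarith
    set q : ℕ := ⌈L⌉₊ with hqdef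
    have hq2 : 2 ≤ q := by
      have : (1 : ℕ) < q := Nat.lt_ceil.2 (by exact_mod_cast hL1)
      omega
    set m : ℕ := q - 2 with hmdef
    have hm2 : ((m : ℝ) + 2) = (q : ℝ) := by
      have h' : m + 2 = q := by omega
      exact_mod_cast congrArg (Nat.cast : ℕ → ℝ) h'
    have hm1 : ((m : ℝ) + 1) = (q : ℝ) - 1 := by rw [← hm2]; ring
    have hLq : L ≤ (q : ℝ) := Nat.le_ceil L
    have hq1L : (q : ℝ) - 1 < L := by
      have := Nat.ceil_lt_add_one (show (0 : ℝ) ≤ L by linarith)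
      rw [← hqdef] at this
      linarith
    have hts : t = Real.exp (-L) := by
      rw [hLdef, neg_neg, Real.exp_log ht]
    refine Set.mem_iUnion.2 ⟨m, ?_⟩
    rw [hSdef]
    intro i _
    fin_cases i
    · show z 0 ∈ A m
      rw [hAdef]
      refine ⟨?_, ?_⟩
      · rw [← htdef, hts, hm2]
        exact Real.exp_le_exp.2 (by linarith)
      · rw [← htdef, hts, hm1]
        exact Real.exp_lt_exp.2 (by linarith)
    · exact hz1
    · exact hz2
  -- volumes
  set W1 : ENNReal := volume (Metric.ball c e0) with hW1def
  set W2 : ENNReal := volume (Metric.ball (0 : ℂ) 1) with hW2def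
  have hW1top : W1 < ⊤ := measure_ball_lt_top
  have hW2top : W2 < ⊤ := measure_ball_lt_top
  set D : ENNReal := (NNReal.pi : ENNReal) * W1 * W2 with hDdef
  have hDtop : D < ⊤ := by
    rw [hDdef]
    exact ENNReal.mul_lt_top (ENNReal.mul_lt_top ENNReal.coe_lt_top hW1top) hW2top
  have hSvol : ∀ m : ℕ, volume (S m) ≤
      ENNReal.ofReal (Real.exp (-((m : ℝ) + 1))) ^ 2 * (NNReal.pi : ENNReal) * W1 * W2 := by
    intro m
    have hAsub : A m ⊆ Metric.ball (0 : ℂ) (Real.exp (-((m : ℝ) + 1))) := by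
      intro w hw
      rw [Metric.mem_ball, Complex.dist_eq, sub_zero] at *
      exact hw.2
    have hAvol : volume (A m) ≤ ENNReal.ofReal (Real.exp (-((m : ℝ) + 1))) ^ 2 *
        (NNReal.pi : ENNReal) := by
      calc volume (A m) ≤ volume (Metric.ball (0 : ℂ) (Real.exp (-((m : ℝ) + 1)))) :=
            measure_mono hAsub
        _ = ENNReal.ofReal (Real.exp (-((m : ℝ) + 1))) ^ 2 * (NNReal.pi : ENNReal) :=
            Complex.volume_ball _ _
    rw [hSdef]
    calc volume (Set.pi Set.univ ![A m, Metric.ball c e0, Metric.ball (0 : ℂ) 1])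
        = volume (A m) * W1 * W2 := by
          rw [volume_pi_pi, Fin.prod_univ_three]
          simp [hW1def, hW2def]
      _ ≤ ENNReal.ofReal (Real.exp (-((m : ℝ) + 1))) ^ 2 * (NNReal.pi : ENNReal) * W1 * W2 := by
          exact mul_le_mul_left (mul_le_mul_left hAvol _) _
  -- pointwise bound on each S m
  set g : ℕ → ℝ := fun m => K * Real.exp 2 * ((m : ℝ) + 2) ^ e0 * (((m : ℝ) + 1) ^ α)⁻¹
    with hgdef
  set cm : ℕ → ENNReal := fun m => ENNReal.ofReal (K * ((m : ℝ) + 2) ^ e0) *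
    ENNReal.ofReal (Real.exp (2 * ((m : ℝ) + 2)) * (((m : ℝ) + 1) ^ α)⁻¹) with hcmdef
  have hpt : ∀ m : ℕ, ∀ z ∈ S m,
      EReal.exp (-((((1 + ε : ℝ)) : EReal) * phi3 lam z)) *
        ENNReal.ofReal
          (1 / (‖z 0‖ ^ 2 * (-Real.log (‖z 0‖)) ^ α)) ≤ cm m := by
    intro m z hzS
    have hz0 : z 0 ∈ A m := by have := hzS 0 (Set.mem_univ 0); simpa [hSdef] using this
    have hz1 : z 1 ∈ Metric.ball c e0 := by
      have := hzS 1 (Set.mem_univ 1); simpa [hSdef] using this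
    set t : ℝ := ‖z 0‖ with htdef
    have htlow : Real.exp (-((m : ℝ) + 2)) ≤ t := hz0.1
    have hthigh : t < Real.exp (-((m : ℝ) + 1)) := hz0.2
    have ht : 0 < t := lt_of_lt_of_le (Real.exp_pos _) htlow
    set L : ℝ := -Real.log t with hLdef
    have hLlow : (m : ℝ) + 1 < L := by
      have := Real.log_lt_log ht hthigh
      rw [Real.log_exp] at this
      rw [hLdef]; linarith
    have hLhigh : L ≤ (m : ℝ) + 2 := by
      have := Real.log_le_log (Real.exp_pos _) htlow
      rw [Real.log_exp] at this
      rw [hLdef]; linarith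
    have hL1 : 1 < L := by
      have : (1 : ℝ) ≤ (m : ℝ) + 1 := by
        have : (0 : ℝ) ≤ (m : ℝ) := Nat.cast_nonneg m
        linarith
      linarith
    have hL0 : 0 < L := by linarith
    set d : ℕ → ℝ := fun k => ‖z 1 - 1 / ((k : ℂ) + 2)‖ with hddef
    have hd : ∀ k, e0 ≤ d k := by
      intro k
      have h1 : ‖z 1 - c‖ < e0 := by
        rw [← Complex.dist_eq]
        have := Metric.mem_ball.1 hz1
        rwa [dist_comm] at this
      have h2 : d0 ≤ ‖c - 1 / ((k : ℂ) + 2)‖ := hd0 k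
      have h3 : ‖c - 1 / ((k : ℂ) + 2)‖ - ‖z 1 - c‖ ≤ d k := by
        rw [hddef]
        have habs : ‖c - 1 / ((k : ℂ) + 2)‖ ≤
            ‖z 1 - 1 / ((k : ℂ) + 2)‖ + ‖z 1 - c‖ := by
          have hh := norm_sub_le (z 1 - 1 / ((k : ℂ) + 2)) (z 1 - c)
          rw [show (z 1 - 1 / ((k : ℂ) + 2)) - (z 1 - c) = c - 1 / ((k : ℂ) + 2) by ring] at hh
          simpa using hh
        linarith
      have : e0 ≤ d0 - e0 := by linarith
      linarith
    -- apply the master pointwise bound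
    have hphi3 : phi3 lam z =
        max (∑' k : ℕ, ((al (k + 2) : ℝ) : EReal) * eLog (t + d k ^ be (k + 2)))
          (((lam : ℝ) : EReal) * eLog (‖z 2‖)) := rfl
    have hexp := AdjointAux.master_pointwise ε e0 C hε he0pos he05 hCdef N₀ hN₀3 hN₀
      t L ht hLdef hL1 d hd (((lam : ℝ) : EReal) * eLog (‖z 2‖))
    rw [← hphi3, ← hKdef] at hexp
    have h1' : EReal.exp (-((((1 + ε : ℝ)) : EReal) * phi3 lam z)) ≤
        ENNReal.ofReal (K * ((m : ℝ) + 2) ^ e0) := by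
      refine le_trans hexp (ENNReal.ofReal_le_ofReal ?_)
      apply mul_le_mul_of_nonneg_left _ hK0
      exact Real.rpow_le_rpow hL0.le hLhigh he0pos.le
    have h2' : ENNReal.ofReal (1 / (t ^ 2 * (-Real.log t) ^ α)) ≤
        ENNReal.ofReal (Real.exp (2 * ((m : ℝ) + 2)) * (((m : ℝ) + 1) ^ α)⁻¹) := by
      apply ENNReal.ofReal_le_ofReal
      rw [one_div, mul_inv, ← hLdef]
      have hm1pos : (0 : ℝ) < (m : ℝ) + 1 := by positivity
      have hb1 : (t ^ 2)⁻¹ ≤ Real.exp (2 * ((m : ℝ) + 2)) := by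
        have hsq : Real.exp (-((m : ℝ) + 2)) ^ 2 ≤ t ^ 2 := by
          apply pow_le_pow_left₀ (Real.exp_pos _).le htlow
        have hinv : (t ^ 2)⁻¹ ≤ (Real.exp (-((m : ℝ) + 2)) ^ 2)⁻¹ :=
          inv_anti₀ (by positivity) hsq
        have heq2 : (Real.exp (-((m : ℝ) + 2)) ^ 2)⁻¹ = Real.exp (2 * ((m : ℝ) + 2)) := by
          rw [← Real.exp_nat_mul, ← Real.exp_neg]
          congr 1
          push_cast
          ring
        rwa [heq2] at hinv
      have hb2 : ((L : ℝ) ^ α)⁻¹ ≤ (((m : ℝ) + 1) ^ α)⁻¹ := by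
        apply inv_anti₀ (Real.rpow_pos_of_pos hm1pos _)
        exact Real.rpow_le_rpow hm1pos.le hLlow.le (by linarith)
      have hnn : (0 : ℝ) ≤ (L ^ α)⁻¹ := by positivity
      calc (t ^ 2)⁻¹ * (L ^ α)⁻¹ ≤ Real.exp (2 * ((m : ℝ) + 2)) * (L ^ α)⁻¹ :=
            mul_le_mul_of_nonneg_right hb1 hnn
        _ ≤ Real.exp (2 * ((m : ℝ) + 2)) * (((m : ℝ) + 1) ^ α)⁻¹ :=
            mul_le_mul_of_nonneg_left hb2 (Real.exp_pos _).le
    simp only [hcmdef]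
    exact mul_le_mul' h1' h2'
  -- summability of the series g
  have hgnn : ∀ m : ℕ, 0 ≤ g m := by
    intro m
    simp only [hgdef]
    positivity
  have hαe0 : e0 - α < -1 := by linarith
  have hgsum : Summable g := by
    have hb : Summable (fun m : ℕ => K * Real.exp 2 * ((2 : ℝ) ^ e0 * ((m : ℝ) + 1) ^ (e0 - α))) := by
      apply Summable.mul_left
      apply Summable.mul_left
      have h1 : Summable (fun n : ℕ => ((n : ℝ)) ^ (e0 - α)) :=
        Real.summable_nat_rpow.2 hαe0
      have h2 : Summable (fun n : ℕ => (((n + 1 : ℕ) : ℝ)) ^ (e0 - α)) :=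
        (summable_nat_add_iff 1).2 h1
      apply h2.congr
      intro n
      congr 1
      push_cast
      ring
    apply Summable.of_nonneg_of_le hgnn _ hb
    intro m
    simp only [hgdef]
    have hm1pos : (0 : ℝ) < (m : ℝ) + 1 := by positivity
    have hs1 : ((m : ℝ) + 2) ^ e0 ≤ (2 : ℝ) ^ e0 * ((m : ℝ) + 1) ^ e0 := by
      rw [← Real.mul_rpow (by norm_num) hm1pos.le]
      apply Real.rpow_le_rpow (by positivity) (by linarith) he0pos.le
    have hs2 : ((m : ℝ) + 1) ^ e0 * (((m : ℝ) + 1) ^ α)⁻¹ = ((m : ℝ) + 1) ^ (e0 - α) := by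
      rw [Real.rpow_sub hm1pos, div_eq_mul_inv]
    calc K * Real.exp 2 * ((m : ℝ) + 2) ^ e0 * (((m : ℝ) + 1) ^ α)⁻¹
        ≤ K * Real.exp 2 * ((2 : ℝ) ^ e0 * ((m : ℝ) + 1) ^ e0) * (((m : ℝ) + 1) ^ α)⁻¹ := by
          apply mul_le_mul_of_nonneg_right _ (by positivity)
          exact mul_le_mul_of_nonneg_left hs1 (by positivity)
      _ = K * Real.exp 2 * ((2 : ℝ) ^ e0 * (((m : ℝ) + 1) ^ e0 * (((m : ℝ) + 1) ^ α)⁻¹)) := by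
          ring
      _ = K * Real.exp 2 * ((2 : ℝ) ^ e0 * ((m : ℝ) + 1) ^ (e0 - α)) := by rw [hs2]
  -- per-annulus integral bound
  have hperm : ∀ m : ℕ, ∫⁻ z in S m,
      EReal.exp (-((((1 + ε : ℝ)) : EReal) * phi3 lam z)) *
        ENNReal.ofReal
          (1 / (‖z 0‖ ^ 2 * (-Real.log (‖z 0‖)) ^ α)) ≤
      ENNReal.ofReal (g m) * D := by
    intro m
    have hle1 : ∫⁻ z in S m,
        EReal.exp (-((((1 + ε : ℝ)) : EReal) * phi3 lam z)) *
          ENNReal.ofReal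
            (1 / (‖z 0‖ ^ 2 * (-Real.log (‖z 0‖)) ^ α)) ≤
        cm m * volume (S m) := by
      calc ∫⁻ z in S m, EReal.exp (-((((1 + ε : ℝ)) : EReal) * phi3 lam z)) *
            ENNReal.ofReal
              (1 / (‖z 0‖ ^ 2 * (-Real.log (‖z 0‖)) ^ α))
          ≤ ∫⁻ _z in S m, cm m := setLIntegral_mono' (hSmeas m) (hpt m)
        _ = cm m * volume (S m) := setLIntegral_const _ _
    refine le_trans hle1 ?_
    have hprod : cm m * (ENNReal.ofReal (Real.exp (-((m : ℝ) + 1))) ^ 2) =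
        ENNReal.ofReal (g m) := by
      simp only [hcmdef]
      rw [← ENNReal.ofReal_pow (Real.exp_pos _).le,
        ← ENNReal.ofReal_mul (by positivity), ← ENNReal.ofReal_mul (by positivity)]
      congr 1
      have hexp2 : Real.exp (2 * ((m : ℝ) + 2)) * Real.exp (-((m : ℝ) + 1)) ^ 2 =
          Real.exp 2 := by
        rw [← Real.exp_nat_mul, ← Real.exp_add]
        norm_num
        ring_nf
      simp only [hgdef]
      calc K * ((m : ℝ) + 2) ^ e0 * (Real.exp (2 * ((m : ℝ) + 2)) * (((m : ℝ) + 1) ^ α)⁻¹) *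
            Real.exp (-((m : ℝ) + 1)) ^ 2
          = K * ((m : ℝ) + 2) ^ e0 * (((m : ℝ) + 1) ^ α)⁻¹ *
            (Real.exp (2 * ((m : ℝ) + 2)) * Real.exp (-((m : ℝ) + 1)) ^ 2) := by ring
        _ = K * Real.exp 2 * ((m : ℝ) + 2) ^ e0 * (((m : ℝ) + 1) ^ α)⁻¹ := by
            rw [hexp2]; ring
    calc cm m * volume (S m)
        ≤ cm m * (ENNReal.ofReal (Real.exp (-((m : ℝ) + 1))) ^ 2 * (NNReal.pi : ENNReal) *
            W1 * W2) := mul_le_mul_right (hSvol m) _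
      _ = (cm m * ENNReal.ofReal (Real.exp (-((m : ℝ) + 1))) ^ 2) *
            ((NNReal.pi : ENNReal) * W1 * W2) := by ring
      _ = ENNReal.ofReal (g m) * D := by rw [hprod, hDdef]
  -- put everything together
  calc ∫⁻ z in V, EReal.exp (-((((1 + ε : ℝ)) : EReal) * phi3 lam z)) *
        ENNReal.ofReal
          (1 / (‖z 0‖ ^ 2 * (-Real.log (‖z 0‖)) ^ α))
      ≤ ∫⁻ z in ({z : Fin 3 → ℂ | z 0 = 0} ∪ ⋃ m, S m),
          EReal.exp (-((((1 + ε : ℝ)) : EReal) * phi3 lam z)) *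
          ENNReal.ofReal
            (1 / (‖z 0‖ ^ 2 * (-Real.log (‖z 0‖)) ^ α)) :=
        lintegral_mono_set hcover
    _ ≤ (∫⁻ z in {z : Fin 3 → ℂ | z 0 = 0},
          EReal.exp (-((((1 + ε : ℝ)) : EReal) * phi3 lam z)) *
          ENNReal.ofReal
            (1 / (‖z 0‖ ^ 2 * (-Real.log (‖z 0‖)) ^ α))) +
        (∫⁻ z in (⋃ m, S m),
          EReal.exp (-((((1 + ε : ℝ)) : EReal) * phi3 lam z)) *
          ENNReal.ofReal
            (1 / (‖z 0‖ ^ 2 * (-Real.log (‖z 0‖)) ^ α))) :=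
        lintegral_union_le _ _ _
    _ = ∫⁻ z in (⋃ m, S m),
          EReal.exp (-((((1 + ε : ℝ)) : EReal) * phi3 lam z)) *
          ENNReal.ofReal
            (1 / (‖z 0‖ ^ 2 * (-Real.log (‖z 0‖)) ^ α)) := by
        rw [setLIntegral_measure_zero _ _ hnull, zero_add]
    _ ≤ ∑' m : ℕ, ∫⁻ z in S m,
          EReal.exp (-((((1 + ε : ℝ)) : EReal) * phi3 lam z)) *
          ENNReal.ofReal
            (1 / (‖z 0‖ ^ 2 * (-Real.log (‖z 0‖)) ^ α)) :=
        lintegral_iUnion_le _ _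
    _ ≤ ∑' m : ℕ, ENNReal.ofReal (g m) * D := ENNReal.tsum_le_tsum hperm
    _ = (∑' m : ℕ, ENNReal.ofReal (g m)) * D := ENNReal.tsum_mul_right
    _ < ⊤ := by
        apply ENNReal.mul_lt_top _ hDtop
        rw [← ENNReal.ofReal_tsum_of_nonneg hgnn hgsum]
        exact ENNReal.ofReal_lt_top

-- axiom check
-- #print axioms adjoint_ideal_stmt12
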